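/- arXiv:1401.0637 — 2 statements merged into one kernel-verified Lean document; each statement's English description precedes it below -/
import Mathlib

section
/- The semigroup Z (the set L ∪ L¹GL¹ with operation z₁ · z₂ = f̌(z₁z₂)) is a local group; its minimal ideal is I = L¹GL¹; the map φ : I → J, ugv ↦ (u, g, v), is a semigroup isomorphism from I onto the Rees matrix semigroup J = M[G; L¹, L¹; P] with structure matrix P = (f̂(uv))_{u,v ∈ L¹}; and the Rees quotient Z/I = L ∪ {0} is a nilpotent semigroup (0 is its unique idempotent). -/
open List

variable {A : Type*} {G : Type*} {A_G : Type*}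

/-- `L̈`: the words not in `L` whose maximal proper prefix and suffix are in `L`. -/
def Ddot (L : Set (List A)) : Set (List A) :=
  {v | v ∉ L ∧ v.dropLast ∈ L ∧ v.tail ∈ L}

/-- `IsSc L w s` : `s` is the sequence of coordinates of `w` determined by `L`,
via the recursive construction of the paper: if `w ∈ L` then `s = (w)`; otherwise
select an occurrence `w = w' v w''` of a factor `v ∈ L̈` and put
`s = sc_L[w' v_α] (v) sc_L[v_ω w'']`. -/
inductive IsSc (L : Set (List A)) : List A → List (List A) → Prop
  | base (w : List A) (hw : w ∈ L) : IsSc L w [w]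
  | step (w' w'' v : List A) (s₁ s₂ : List (List A)) (hv : v ∈ Ddot L)
      (h₁ : IsSc L (w' ++ v.dropLast) s₁) (h₂ : IsSc L (v.tail ++ w'') s₂) :
      IsSc L (w' ++ v ++ w'') (s₁ ++ v :: s₂)

open Classical in
/-- `sc_L[w]`, the sequence of coordinates of `w` determined by `L`. -/
noncomputable def scL (L : Set (List A)) (w : List A) : List (List A) :=
  if h : ∃ s, IsSc L w s then h.choose else []
section CoreG
variable [Group G]

/-- Evaluation of a word over `A_G` in the group `G`. -/
def evalW (evA : A_G → G) (u : List A_G) : G := (u.map evA).prod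

/-- `f̂ : A* → G`. -/
noncomputable def fhat (L : Set (List A)) (f : List A → G) (w : List A) : G :=
  ((scL L w).map f).prod

/-- first coordinate (word part of `f̀`). -/
noncomputable def graveWord (L : Set (List A)) (w : List A) : List A :=
  (scL L w).headI

/-- group part of `f̀`. -/
noncomputable def graveG (L : Set (List A)) (f : List A → G) (w : List A) : G :=
  ((scL L w).tail.map f).prod

/-- last coordinate (word part of `f́`). -/
noncomputable def acuteWord (L : Set (List A)) (w : List A) : List A :=
  (scL L w).getLastD []

/-- group part of `f́`. -/
noncomputable def acuteG (L : Set (List A)) (f : List A → G) (w : List A) : G :=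
  ((scL L w).dropLast.map f).prod

/-- The word over `X = A ⊕ A_G` determined by a coordinate sequence:
`w₀ f(ẅ₁)f(w₁)⋯f(ẅ_m) w_m`, the middle group element written as its
chosen representative word over `A_G`. -/
def checkOfSeq (f : List A → G) (rep : G → List A_G) :
    List (List A) → List (A ⊕ A_G)
  | [] => []
  | [w] => w.map Sum.inl
  | w :: rest =>
      w.map Sum.inl ++ (rep ((rest.dropLast.map f).prod)).map Sum.inr ++
        (rest.getLastD []).map Sum.inl

/-- longest prefix of `A`-letters. -/
def takeA : List (A ⊕ A_G) → List A
  | Sum.inl a :: r => a :: takeA r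
  | _ => []

def dropA : List (A ⊕ A_G) → List (A ⊕ A_G)
  | Sum.inl _ :: r => dropA r
  | w => w

/-- longest prefix of `A_G`-letters. -/
def takeG : List (A ⊕ A_G) → List A_G
  | Sum.inr b :: r => b :: takeG r
  | _ => []

def dropG : List (A ⊕ A_G) → List (A ⊕ A_G)
  | Sum.inr _ :: r => dropG r
  | w => w

/-- Processing of the part `g₁u₁g₂u₂⋯g_nu_n` of a mixed word: returns the group
element `eval(g₁)·f̂(u₁)·…·eval(g_n)·(acute part of u_n)` together with the final
word coordinate of `u_n`.  (Fuel-based recursion.) -/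
noncomputable def midRunAux (L : Set (List A)) (f : List A → G) (evA : A_G → G) :
    ℕ → List (A ⊕ A_G) → G × List A
  | 0, _ => (1, [])
  | n + 1, w =>
      match dropA (dropG w) with
      | [] => (evalW evA (takeG w) * acuteG L f (takeA (dropG w)),
               acuteWord L (takeA (dropG w)))
      | r' => (evalW evA (takeG w) * fhat L f (takeA (dropG w)) *
                 (midRunAux L f evA n r').1,
               (midRunAux L f evA n r').2)

/-- The extension `f̌ : X⁺ → Z ⊆ X⁺` of `f̌` to mixed words
(`f̌(u₀g₁u₁⋯g_nu_n) = f̀(u₀) g₁ f̂(u₁) ⋯ g_n f́(u_n)`, the middle group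
element written as its representative word). -/
noncomputable def fcheckX (L : Set (List A)) (f : List A → G) (evA : A_G → G)
    (rep : G → List A_G) (w : List (A ⊕ A_G)) : List (A ⊕ A_G) :=
  match dropA w with
  | [] => checkOfSeq f rep (scL L (takeA w))
  | r =>
      (graveWord L (takeA w)).map Sum.inl ++
        (rep (graveG L f (takeA w) * (midRunAux L f evA r.length r).1)).map Sum.inr ++
        (midRunAux L f evA r.length r).2.map Sum.inl

end CoreG
/-- `Z = L ∪ L¹GL¹` as a set of words over `X = A ⊕ A_G` (group elements written
as their chosen representative words). -/
def Zset (L : Set (List A)) (rep : G → List A_G) : Set (List (A ⊕ A_G)) :=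
  {w | (∃ u ∈ L, w = u.map Sum.inl) ∨
    ∃ (u : List A) (g : G) (v : List A),
      (u ∈ L ∨ u = []) ∧ (v ∈ L ∨ v = []) ∧
      w = u.map Sum.inl ++ (rep g).map Sum.inr ++ v.map Sum.inl}

/-- `I = L¹GL¹`, the minimal ideal of `Z`, as a set of words over `X`. -/
def Iset (L : Set (List A)) (rep : G → List A_G) : Set (List (A ⊕ A_G)) :=
  {w | ∃ (u : List A) (g : G) (v : List A),
      (u ∈ L ∨ u = []) ∧ (v ∈ L ∨ v = []) ∧
      w = u.map Sum.inl ++ (rep g).map Sum.inr ++ v.map Sum.inl}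

section Stmt13
variable [Group G]

/-- The word over `X = A ⊕ A_G` corresponding to a Rees triple `(u, g, v)`. -/
def wordOf (rep : G → List A_G) (p : List A × G × List A) : List (A ⊕ A_G) :=
  p.1.map Sum.inl ++ (rep p.2.1).map Sum.inr ++ p.2.2.map Sum.inl

/-- Multiplication of the Rees matrix semigroup `M[G; L¹, L¹; P]` with
structure matrix `P = (f̂(uv))_{u,v ∈ L¹}`:
`(u, g, v)(u', g', v') = (u, g · f̂(vu') · g', v')`. -/
noncomputable def reesMul (L : Set (List A)) (f : List A → G)
    (p q : List A × G × List A) : List A × G × List A :=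
  (p.1, p.2.1 * fhat L f (p.2.2 ++ q.1) * q.2.1, q.2.2)

end Stmt13


section Helpers
variable {L : Set (List A)}

@[simp] lemma takeA_nil' : takeA ([] : List (A ⊕ A_G)) = [] := rfl
@[simp] lemma dropA_nil' : dropA ([] : List (A ⊕ A_G)) = [] := rfl
@[simp] lemma takeG_nil' : takeG ([] : List (A ⊕ A_G)) = [] := rfl
@[simp] lemma dropG_nil' : dropG ([] : List (A ⊕ A_G)) = [] := rfl
@[simp] lemma takeA_inl_cons (a : A) (r : List (A ⊕ A_G)) :
    takeA (Sum.inl a :: r) = a :: takeA r := rfl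
@[simp] lemma dropA_inl_cons (a : A) (r : List (A ⊕ A_G)) :
    dropA (Sum.inl a :: r) = dropA r := rfl
@[simp] lemma takeA_inr_cons (b : A_G) (r : List (A ⊕ A_G)) :
    takeA (Sum.inr b :: r) = [] := rfl
@[simp] lemma dropA_inr_cons (b : A_G) (r : List (A ⊕ A_G)) :
    dropA (Sum.inr b :: r) = Sum.inr b :: r := rfl
@[simp] lemma takeG_inr_cons (b : A_G) (r : List (A ⊕ A_G)) :
    takeG (Sum.inr b :: r) = b :: takeG r := rfl
@[simp] lemma dropG_inr_cons (b : A_G) (r : List (A ⊕ A_G)) :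
    dropG (Sum.inr b :: r) = dropG r := rfl
@[simp] lemma takeG_inl_cons (a : A) (r : List (A ⊕ A_G)) :
    takeG (Sum.inl a :: r) = [] := rfl
@[simp] lemma dropG_inl_cons (a : A) (r : List (A ⊕ A_G)) :
    dropG (Sum.inl a :: r) = Sum.inl a :: r := rfl

lemma takeA_inl_append (u : List A) (r : List (A ⊕ A_G)) :
    takeA (u.map Sum.inl ++ r) = u ++ takeA r := by
  induction u with
  | nil => simp
  | cons a t ih => simp [ih]

lemma dropA_inl_append (u : List A) (r : List (A ⊕ A_G)) :
    dropA (u.map Sum.inl ++ r) = dropA r := by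
  induction u with
  | nil => simp
  | cons a t ih => simp [ih]

lemma takeG_inr_append (b : List A_G) (r : List (A ⊕ A_G)) :
    takeG (b.map Sum.inr ++ r) = b ++ takeG r := by
  induction b with
  | nil => simp
  | cons a t ih => simp [ih]

lemma dropG_inr_append (b : List A_G) (r : List (A ⊕ A_G)) :
    dropG (b.map Sum.inr ++ r) = dropG r := by
  induction b with
  | nil => simp
  | cons a t ih => simp [ih]

lemma takeA_inr_append {b : List A_G} (hb : b ≠ []) (r : List (A ⊕ A_G)) :
    takeA (b.map Sum.inr ++ r) = [] := by
  cases b with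
  | nil => exact absurd rfl hb
  | cons a t => simp

lemma dropA_inr_append {b : List A_G} (hb : b ≠ []) (r : List (A ⊕ A_G)) :
    dropA (b.map Sum.inr ++ r) = b.map Sum.inr ++ r := by
  cases b with
  | nil => exact absurd rfl hb
  | cons a t => simp

lemma takeG_inl_append {u : List A} (hu : u ≠ []) (r : List (A ⊕ A_G)) :
    takeG (u.map Sum.inl ++ r) = [] := by
  cases u with
  | nil => exact absurd rfl hu
  | cons a t => simp

lemma dropG_inl_append {u : List A} (hu : u ≠ []) (r : List (A ⊕ A_G)) :
    dropG (u.map Sum.inl ++ r) = u.map Sum.inl ++ r := by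
  cases u with
  | nil => exact absurd rfl hu
  | cons a t => simp

@[simp] lemma takeA_map_inl (u : List A) : takeA (u.map Sum.inl : List (A ⊕ A_G)) = u := by
  induction u with
  | nil => simp
  | cons a t ih => simp [ih]

@[simp] lemma dropA_map_inl (u : List A) : dropA (u.map Sum.inl : List (A ⊕ A_G)) = [] := by
  induction u with
  | nil => simp
  | cons a t ih => simp [ih]

@[simp] lemma takeG_map_inl (u : List A) : takeG (u.map Sum.inl : List (A ⊕ A_G)) = [] := by
  cases u <;> simp

@[simp] lemma dropG_map_inl (u : List A) : dropG (u.map Sum.inl : List (A ⊕ A_G)) = u.map Sum.inl := by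
  cases u <;> simp

lemma evalW_append [Group G] (evA : A_G → G) (a b : List A_G) :
    evalW evA (a ++ b) = evalW evA a * evalW evA b := by
  simp [evalW]

lemma Ddot_ne_nil (hE : [] ∉ L) {v : List A} (hv : v ∈ Ddot L) : v ≠ [] := by
  rintro rfl
  exact hE hv.2.1

lemma getLastD_append_cons {α : Type*} (s₁ : List α) (v : α) (s₂ : List α) (d : α) :
    (s₁ ++ v :: s₂).getLastD d = s₂.getLastD v := by
  induction s₁ generalizing d with
  | nil => rw [List.nil_append, List.getLastD_cons]
  | cons a t ih => rw [List.cons_append, List.getLastD_cons]; exact ih a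

lemma IsSc.props {w : List A} {s : List (List A)} (h : IsSc L w s) :
    s ≠ [] ∧ s.headI ∈ L ∧ s.getLastD [] ∈ L := by
  induction h with
  | base w hw => exact ⟨by simp, hw, hw⟩
  | step w' w'' v s₁ s₂ hv h₁ h₂ ih₁ ih₂ =>
    obtain ⟨hn₁, hh₁, _⟩ := ih₁
    obtain ⟨hn₂, _, hl₂⟩ := ih₂
    refine ⟨by simp, ?_, ?_⟩
    · obtain ⟨a, t, rfl⟩ := List.exists_cons_of_ne_nil hn₁
      simpa using hh₁
    · rw [getLastD_append_cons]
      obtain ⟨b, t, rfl⟩ := List.exists_cons_of_ne_nil hn₂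
      rw [List.getLastD_cons]
      rwa [List.getLastD_cons] at hl₂

end Helpers

section IsScFacts
variable {L : Set (List A)}

lemma isSc_of_mem (hE : [] ∉ L)
    (hFac : ∀ u w : List A, w ∈ L → u ≠ [] → u <:+: w → u ∈ L)
    {w : List A} {s : List (List A)} (hw : w ∈ L) (h : IsSc L w s) : s = [w] := by
  cases h with
  | base => rfl
  | step w' w'' v s₁ s₂ hv h₁ h₂ =>
    exact absurd (hFac v _ hw (Ddot_ne_nil hE hv) ⟨w', w'', by simp⟩) hv.1

lemma not_isSc_nil (hE : [] ∉ L) {s : List (List A)} : ¬ IsSc L [] s := by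
  intro h
  generalize hw : ([] : List A) = w0 at h
  cases h with
  | base w hw' => subst hw; exact hE hw'
  | step w' w'' v s₁ s₂ hv h₁ h₂ =>
    have hv0 : v = [] := by
      have := hw.symm
      simp only [List.append_eq_nil_iff] at this
      exact this.1.2
    subst hv0
    exact hE hv.2.1

lemma isSc_exists (hE : [] ∉ L)
    (hFac : ∀ u w : List A, w ∈ L → u ≠ [] → u <:+: w → u ∈ L)
    (hA : ∀ a : A, [a] ∈ L) :
    ∀ w : List A, w ≠ [] → ∃ s, IsSc L w s := by
  classical
  have H : ∀ n, ∀ w : List A, w.length ≤ n → w ≠ [] → ∃ s, IsSc L w s := by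
    intro n
    induction n with
    | zero =>
      intro w hw hne
      exact absurd (List.length_eq_zero_iff.mp (Nat.le_zero.mp hw)) hne
    | succ n ih =>
      intro w hw hne
      by_cases hwL : w ∈ L
      · exact ⟨[w], IsSc.base w hwL⟩
      · have hS : ∃ k, ∃ v : List A, v.length = k ∧ v ≠ [] ∧ v ∉ L ∧ v <:+: w :=
          ⟨w.length, w, rfl, hne, hwL, List.infix_refl w⟩
        obtain ⟨v, hvlen, hvne, hvL, hvw⟩ := Nat.find_spec hS
        have hmin : ∀ m < Nat.find hS, ¬ ∃ v : List A, v.length = m ∧ v ≠ [] ∧ v ∉ L ∧ v <:+: w :=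
          fun m hm => Nat.find_min hS hm
        have hv2 : 2 ≤ v.length := by
          rcases Nat.lt_or_ge v.length 2 with h2 | h2
          · interval_cases hvl : v.length
            · exact absurd (List.length_eq_zero_iff.mp hvl) hvne
            · obtain ⟨a, rfl⟩ := List.length_eq_one_iff.mp hvl
              exact absurd (hA a) hvL
          · exact h2
        have hdropinf : v.dropLast <:+: w := (List.dropLast_prefix v).isInfix.trans hvw
        have htailinf : v.tail <:+: w := (List.tail_suffix v).isInfix.trans hvw
        have hdropne : v.dropLast ≠ [] := by
          rw [← List.length_pos_iff, List.length_dropLast]; omega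
        have htailne : v.tail ≠ [] := by
          rw [← List.length_pos_iff, List.length_tail]; omega
        have hdropL : v.dropLast ∈ L := by
          by_contra hc
          have : v.dropLast.length < Nat.find hS := by
            rw [List.length_dropLast, hvlen]; omega
          exact hmin _ this ⟨v.dropLast, rfl, hdropne, hc, hdropinf⟩
        have htailL : v.tail ∈ L := by
          by_contra hc
          have : v.tail.length < Nat.find hS := by
            rw [List.length_tail, hvlen]; omega
          exact hmin _ this ⟨v.tail, rfl, htailne, hc, htailinf⟩
        obtain ⟨w', w'', hww⟩ := hvw
        have hlen : w'.length + v.length + w''.length = w.length := by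
          rw [← hww]; simp; omega
        obtain ⟨s₁, hs₁⟩ := ih (w' ++ v.dropLast)
          (by simp [List.length_dropLast]; omega)
          (by simp [hdropne])
        obtain ⟨s₂, hs₂⟩ := ih (v.tail ++ w'')
          (by simp [List.length_tail]; omega)
          (by simp [htailne])
        refine ⟨s₁ ++ v :: s₂, ?_⟩
        have := IsSc.step w' w'' v s₁ s₂ ⟨hvL, hdropL, htailL⟩ hs₁ hs₂
        rwa [hww] at this
  exact fun w hne => H w.length w le_rfl hne

lemma isSc_not_mem {w : List A} {s : List (List A)} (h : IsSc L w s) (hw : w ∉ L) :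
    ∃ a b t, s = a :: b :: t := by
  cases h with
  | base w hw' => exact absurd hw' hw
  | step w' w'' v s₁ s₂ hv h₁ h₂ =>
    obtain ⟨a, t₁, rfl⟩ := List.exists_cons_of_ne_nil h₁.props.1
    obtain ⟨b, t, hbt⟩ := List.exists_cons_of_ne_nil
      (show t₁ ++ v :: s₂ ≠ [] by simp)
    exact ⟨a, b, t, by simp [hbt]⟩

lemma scL_isSc {w : List A} (h : ∃ s, IsSc L w s) : IsSc L w (scL L w) := by
  rw [scL, dif_pos h]
  exact h.choose_spec

lemma scL_nil (hE : [] ∉ L) : scL L ([] : List A) = [] := by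
  rw [scL, dif_neg]
  rintro ⟨s, hs⟩
  exact not_isSc_nil hE hs

lemma scL_of_mem (hE : [] ∉ L)
    (hFac : ∀ u w : List A, w ∈ L → u ≠ [] → u <:+: w → u ∈ L)
    {w : List A} (hw : w ∈ L) : scL L w = [w] :=
  isSc_of_mem hE hFac hw (scL_isSc ⟨[w], IsSc.base w hw⟩)

end IsScFacts

section GroupFacts
variable [Group G] {L : Set (List A)} (f : List A → G)

lemma fhat_nil (hE : [] ∉ L) : fhat L f ([] : List A) = 1 := by
  simp [fhat, scL_nil hE]

lemma fhat_of_mem (hE : [] ∉ L)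
    (hFac : ∀ u w : List A, w ∈ L → u ≠ [] → u <:+: w → u ∈ L)
    {w : List A} (hw : w ∈ L) : fhat L f w = f w := by
  simp [fhat, scL_of_mem hE hFac hw]

variable (L) in
lemma scL_L1 (hE : [] ∉ L)
    (hFac : ∀ u w : List A, w ∈ L → u ≠ [] → u <:+: w → u ∈ L)
    {w : List A} (hw : w ∈ L ∨ w = []) :
    graveWord L w = w ∧ graveG L f w = 1 ∧ acuteWord L w = w ∧ acuteG L f w = 1 := by
  rcases hw with hw | rfl
  · simp [graveWord, graveG, acuteWord, acuteG, scL_of_mem hE hFac hw]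
  · simp only [graveWord, graveG, acuteWord, acuteG, scL_nil hE]
    exact ⟨rfl, rfl, rfl, rfl⟩

variable (L) in
lemma word_mem_of_ne (hE : [] ∉ L)
    (hFac : ∀ u w : List A, w ∈ L → u ≠ [] → u <:+: w → u ∈ L)
    (hA : ∀ a : A, [a] ∈ L) {w : List A} (hw : w ≠ []) :
    graveWord L w ∈ L ∧ acuteWord L w ∈ L := by
  have h := (scL_isSc (isSc_exists hE hFac hA w hw)).props
  exact ⟨h.2.1, h.2.2⟩

end GroupFacts

/-- the body `m₁ g₂ m₂ g₃ ⋯ v` of a normal-form word. -/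
def body (rep : G → List A_G) : List (List A × G) → List A → List (A ⊕ A_G)
  | [], v => v.map Sum.inl
  | (m, g) :: t, v => m.map Sum.inl ++ (rep g).map Sum.inr ++ body rep t v

noncomputable def segval [Group G] (L : Set (List A)) (f : List A → G) :
    List (List A × G) → List A → G
  | [], v => acuteG L f v
  | (m, g) :: t, v => fhat L f m * (g * segval L f t v)

lemma body_length {rep : G → List A_G} (hrepne : ∀ g : G, rep g ≠ [])
    (bl : List (List A × G)) (v : List A) :
    bl.length ≤ (body rep bl v).length := by
  induction bl with
  | nil => simp
  | cons p t ih =>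
    obtain ⟨m, g⟩ := p
    have := List.length_pos_iff.mpr (hrepne g)
    simp only [body, List.length_append, List.length_cons, List.length_map]
    omega

section MidRun
variable [Group G] (L : Set (List A)) (f : List A → G) (evA : A_G → G)

lemma midRunAux_succ_nil {w : List (A ⊕ A_G)} {n : ℕ}
    (h : dropA (dropG w) = []) :
    midRunAux L f evA (n + 1) w =
      (evalW evA (takeG w) * acuteG L f (takeA (dropG w)),
        acuteWord L (takeA (dropG w))) := by
  rw [midRunAux, h]

lemma midRunAux_succ_cons {w : List (A ⊕ A_G)} {n : ℕ} {x : A ⊕ A_G}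
    {r : List (A ⊕ A_G)} (h : dropA (dropG w) = x :: r) :
    midRunAux L f evA (n + 1) w =
      (evalW evA (takeG w) * fhat L f (takeA (dropG w)) *
        (midRunAux L f evA n (x :: r)).1,
        (midRunAux L f evA n (x :: r)).2) := by
  rw [midRunAux, h]

variable {rep : G → List A_G}

lemma midRun_spec (hE : [] ∉ L) (hrepne : ∀ g : G, rep g ≠ [])
    (hrep : ∀ g : G, evalW evA (rep g) = g) :
    ∀ (bl : List (List A × G)) (n : ℕ) (b : List A_G) (g : G) (v : List A),
      b ≠ [] → evalW evA b = g → bl.length < n →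
      midRunAux L f evA n (b.map Sum.inr ++ body rep bl v) =
        (g * segval L f bl v, acuteWord L v) := by
  intro bl
  induction bl with
  | nil =>
    intro n b g v hb hg hn
    obtain ⟨m, rfl⟩ : ∃ m, n = m + 1 := ⟨n - 1, by omega⟩
    have h1 : dropG (b.map Sum.inr ++ body rep [] v) = v.map Sum.inl := by
      rw [show body rep [] v = v.map Sum.inl from rfl, dropG_inr_append, dropG_map_inl]
    rw [midRunAux_succ_nil L f evA (by rw [h1, dropA_map_inl])]
    rw [h1, takeA_map_inl, show body rep [] v = v.map Sum.inl from rfl,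
      takeG_inr_append, takeG_map_inl, List.append_nil, hg]
    rfl
  | cons p t ih =>
    obtain ⟨m, g'⟩ := p
    intro n b g v hb hg hn
    by_cases hm : m = []
    · subst hm
      have hb' : b.map Sum.inr ++ body rep (([], g') :: t) v
          = (b ++ rep g').map Sum.inr ++ body rep t v := by
        simp [body, List.append_assoc]
      rw [hb', ih n (b ++ rep g') (g * g') v (by simp [hb])
        (by rw [evalW_append, hg, hrep]) (by simp at hn ⊢; omega)]
      simp [segval, fhat_nil f hE, mul_assoc]
    · obtain ⟨k, rfl⟩ : ∃ k, n = k + 1 := ⟨n - 1, by omega⟩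
      have hbody : body rep ((m, g') :: t) v
          = m.map Sum.inl ++ ((rep g').map Sum.inr ++ body rep t v) := by
        simp [body, List.append_assoc]
      have h1 : dropG (b.map Sum.inr ++ body rep ((m, g') :: t) v)
          = m.map Sum.inl ++ ((rep g').map Sum.inr ++ body rep t v) := by
        rw [hbody, dropG_inr_append, dropG_inl_append hm]
      have h2 : dropA (dropG (b.map Sum.inr ++ body rep ((m, g') :: t) v))
          = (rep g').map Sum.inr ++ body rep t v := by
        rw [h1, dropA_inl_append, dropA_inr_append (hrepne g')]
      obtain ⟨x, r, hxr⟩ := List.exists_cons_of_ne_nil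
        (show (rep g').map Sum.inr ++ body rep t v ≠ [] by
          simp [hrepne g'])
      rw [midRunAux_succ_cons L f evA (by rw [h2, hxr]), ← hxr]
      rw [ih k (rep g') g' v (hrepne g') (hrep g') (by simp at hn; omega)]
      rw [h1, takeA_inl_append, takeA_inr_append (hrepne g'), List.append_nil]
      rw [takeG_inr_append, hbody, takeG_inl_append hm, List.append_nil, hg]
      simp [segval, mul_assoc]

lemma fcheckX_of_dropA_nil {w : List (A ⊕ A_G)} (h : dropA w = []) :
    fcheckX L f evA rep w = checkOfSeq f rep (scL L (takeA w)) := by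
  rw [fcheckX, h]

lemma fcheckX_of_dropA_cons {w : List (A ⊕ A_G)} {x : A ⊕ A_G} {r : List (A ⊕ A_G)}
    (h : dropA w = x :: r) :
    fcheckX L f evA rep w =
      (graveWord L (takeA w)).map Sum.inl ++
        (rep (graveG L f (takeA w) * (midRunAux L f evA (x :: r).length (x :: r)).1)).map Sum.inr ++
        (midRunAux L f evA (x :: r).length (x :: r)).2.map Sum.inl := by
  rw [fcheckX, h]

lemma fcheck_spec (hE : [] ∉ L) (hrepne : ∀ g : G, rep g ≠ [])
    (hrep : ∀ g : G, evalW evA (rep g) = g)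
    (bl : List (List A × G)) (g : G) (v u : List A) :
    fcheckX L f evA rep (u.map Sum.inl ++ ((rep g).map Sum.inr ++ body rep bl v)) =
      (graveWord L u).map Sum.inl ++
        (rep (graveG L f u * (g * segval L f bl v))).map Sum.inr ++
        (acuteWord L v).map Sum.inl := by
  set r : List (A ⊕ A_G) := (rep g).map Sum.inr ++ body rep bl v with hr
  have hrne : r ≠ [] := by simp [hr, hrepne g]
  have hdrop : dropA (u.map Sum.inl ++ r) = r := by
    rw [dropA_inl_append, hr, dropA_inr_append (hrepne g)]
  have htake : takeA (u.map Sum.inl ++ r) = u := by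
    rw [takeA_inl_append, hr, takeA_inr_append (hrepne g), List.append_nil]
  obtain ⟨x, r', hxr⟩ := List.exists_cons_of_ne_nil hrne
  have hlen : bl.length < ((rep g).map Sum.inr ++ body rep bl v).length := by
    have h1 := body_length hrepne bl v
    have h2 := List.length_pos_iff.mpr (hrepne g)
    simp only [List.length_append, List.length_map]
    omega
  rw [fcheckX_of_dropA_cons L f evA (by rw [hdrop, hxr]), ← hxr, htake, hr,
    midRun_spec L f evA hE hrepne hrep bl _ (rep g) g v
      (hrepne g) (hrep g) hlen]

end MidRun

section Prod
variable [Group G] (L : Set (List A)) (f : List A → G) (evA : A_G → G)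
variable {rep : G → List A_G}

lemma fcheck_seg1 (hE : [] ∉ L) (hrepne : ∀ g : G, rep g ≠ [])
    (hrep : ∀ g : G, evalW evA (rep g) = g) (u : List A) (g : G) (v : List A) :
    fcheckX L f evA rep (u.map Sum.inl ++ ((rep g).map Sum.inr ++ v.map Sum.inl)) =
      (graveWord L u).map Sum.inl ++
        (rep (graveG L f u * (g * acuteG L f v))).map Sum.inr ++
        (acuteWord L v).map Sum.inl :=
  fcheck_spec L f evA hE hrepne hrep [] g v u

lemma fcheck_seg2 (hE : [] ∉ L) (hrepne : ∀ g : G, rep g ≠ [])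
    (hrep : ∀ g : G, evalW evA (rep g) = g) (u : List A) (g : G) (m : List A)
    (g' : G) (v : List A) :
    fcheckX L f evA rep (u.map Sum.inl ++ ((rep g).map Sum.inr ++
        (m.map Sum.inl ++ ((rep g').map Sum.inr ++ v.map Sum.inl)))) =
      (graveWord L u).map Sum.inl ++
        (rep (graveG L f u * (g * (fhat L f m * (g' * acuteG L f v))))).map Sum.inr ++
        (acuteWord L v).map Sum.inl := by
  have := fcheck_spec L f evA hE hrepne hrep [(m, g')] g v u
  simpa [body, segval, List.append_assoc] using this

lemma fcheck_seg3 (hE : [] ∉ L) (hrepne : ∀ g : G, rep g ≠ [])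
    (hrep : ∀ g : G, evalW evA (rep g) = g) (u : List A) (g : G) (m₁ : List A)
    (g₂ : G) (m₂ : List A) (g₃ : G) (v : List A) :
    fcheckX L f evA rep (u.map Sum.inl ++ ((rep g).map Sum.inr ++
        (m₁.map Sum.inl ++ ((rep g₂).map Sum.inr ++
          (m₂.map Sum.inl ++ ((rep g₃).map Sum.inr ++ v.map Sum.inl)))))) =
      (graveWord L u).map Sum.inl ++
        (rep (graveG L f u * (g * (fhat L f m₁ * (g₂ *
          (fhat L f m₂ * (g₃ * acuteG L f v))))))).map Sum.inr ++
        (acuteWord L v).map Sum.inl := by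
  have := fcheck_spec L f evA hE hrepne hrep [(m₁, g₂), (m₂, g₃)] g v u
  simpa [body, segval, List.append_assoc] using this

lemma wordOf_inj (hrepne : ∀ g : G, rep g ≠ [])
    (hrep : ∀ g : G, evalW evA (rep g) = g)
    {p q : List A × G × List A} (h : wordOf rep p = wordOf rep q) : p = q := by
  obtain ⟨u, g, v⟩ := p
  obtain ⟨u', g', v'⟩ := q
  have h1 : u = u' := by
    have := congrArg takeA h
    simpa [wordOf, List.append_assoc, takeA_inl_append,
      takeA_inr_append (hrepne _)] using this
  subst h1
  have h2 : (rep g).map Sum.inr ++ v.map Sum.inl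
      = (rep g').map Sum.inr ++ v'.map Sum.inl := by
    have := congrArg dropA h
    simpa [wordOf, List.append_assoc, dropA_inl_append,
      dropA_inr_append (hrepne _)] using this
  have h3 : g = g' := by
    have := congrArg takeG h2
    rw [takeG_inr_append, takeG_inr_append, takeG_map_inl, takeG_map_inl,
      List.append_nil, List.append_nil] at this
    have := congrArg (evalW evA) this
    rwa [hrep, hrep] at this
  subst h3
  have h4 : v = v' := by
    have := congrArg dropG h2
    rw [dropG_inr_append, dropG_inr_append, dropG_map_inl, dropG_map_inl] at this
    exact List.map_injective_iff.mpr Sum.inl_injective this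
  subst h4
  rfl

lemma fcheck_wordOf_mul (hE : [] ∉ L)
    (hFac : ∀ u w : List A, w ∈ L → u ≠ [] → u <:+: w → u ∈ L)
    (hrepne : ∀ g : G, rep g ≠ [])
    (hrep : ∀ g : G, evalW evA (rep g) = g)
    (p q : List A × G × List A)
    (hp1 : p.1 ∈ L ∨ p.1 = []) (hq2 : q.2.2 ∈ L ∨ q.2.2 = []) :
    fcheckX L f evA rep (wordOf rep p ++ wordOf rep q) =
      wordOf rep (reesMul L f p q) := by
  obtain ⟨u, g, v⟩ := p
  obtain ⟨u', g', v'⟩ := q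
  have harg : wordOf rep (u, g, v) ++ wordOf rep (u', g', v')
      = u.map Sum.inl ++ ((rep g).map Sum.inr ++
        ((v ++ u').map Sum.inl ++ ((rep g').map Sum.inr ++ v'.map Sum.inl))) := by
    simp [wordOf, List.append_assoc]
  rw [harg, fcheck_seg2 L f evA hE hrepne hrep]
  obtain ⟨hgw, hgg, -, -⟩ := scL_L1 L f hE hFac hp1
  obtain ⟨-, -, haw', hag'⟩ := scL_L1 L f hE hFac hq2
  rw [hgw, hgg, haw', hag']
  simp [wordOf, reesMul, mul_assoc]

end Prod

section PureSq
variable [Group G] (L : Set (List A)) (f : List A → G) (evA : A_G → G)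
variable {rep : G → List A_G}

lemma checkOfSeq_single (x : List A) :
    checkOfSeq (A_G := A_G) f rep [x] = x.map Sum.inl := rfl

lemma checkOfSeq_cons_cons (a b : List A) (t : List (List A)) :
    checkOfSeq f rep (a :: b :: t) =
      a.map Sum.inl ++ (rep (((b :: t).dropLast.map f).prod)).map Sum.inr ++
        ((b :: t).getLastD []).map Sum.inl := rfl

lemma fcheck_pure (w : List A) :
    fcheckX L f evA rep (w.map Sum.inl) = checkOfSeq f rep (scL L w) := by
  rw [fcheckX_of_dropA_nil L f evA (by rw [dropA_map_inl]), takeA_map_inl]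

lemma pure_sq_ne (hE : [] ∉ L)
    (hFac : ∀ u w : List A, w ∈ L → u ≠ [] → u <:+: w → u ∈ L)
    (hA : ∀ a : A, [a] ∈ L)
    (hrepne : ∀ g : G, rep g ≠ [])
    {w : List A} (hw : w ∈ L) :
    fcheckX L f evA rep (w.map Sum.inl ++ w.map Sum.inl) ≠ w.map Sum.inl := by
  intro hEq
  rw [← List.map_append, fcheck_pure] at hEq
  have hwne : w ≠ [] := by rintro rfl; exact hE hw
  by_cases hww : w ++ w ∈ L
  · rw [scL_of_mem hE hFac hww, checkOfSeq_single] at hEq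
    have := List.map_injective_iff.mpr Sum.inl_injective hEq
    have := congrArg List.length this
    simp at this
    exact hwne this
  · obtain ⟨a, b, t, hs⟩ := isSc_not_mem
      (scL_isSc (isSc_exists hE hFac hA (w ++ w) (by simp [hwne]))) hww
    rw [hs, checkOfSeq_cons_cons] at hEq
    obtain ⟨c, cs, hc⟩ := List.exists_cons_of_ne_nil
      (hrepne (((b :: t).dropLast.map f).prod))
    have hmem : (Sum.inr c : A ⊕ A_G) ∈ (w.map Sum.inl : List (A ⊕ A_G)) := by
      rw [← hEq, hc]
      simp
    simp at hmem

end PureSq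

/-- Proposition 2(5) and Corollary 3. The semigroup
`Z = L ∪ L¹GL¹` with operation `z₁ · z₂ = f̌(z₁z₂)` is a local group; its
minimal ideal is `I = L¹GL¹`; the map `φ : I → J`, `ugv ↦ (u, g, v)`, is a
semigroup isomorphism from `I` onto the Rees matrix semigroup
`J = M[G; L¹, L¹; P]` with `P = (f̂(uv))_{u,v ∈ L¹}`; and the Rees quotient
`Z/I = L ∪ {0}` is a nilpotent semigroup (`0` is its unique idempotent). -/
theorem Zset_local_group [Nonempty A] [Group G]
    (L : Set (List A)) (hE : [] ∉ L)
    (hFac : ∀ u w : List A, w ∈ L → u ≠ [] → u <:+: w → u ∈ L)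
    (hA : ∀ a : A, [a] ∈ L)
    (f : List A → G) (evA : A_G → G) (rep : G → List A_G)
    (hrepne : ∀ g : G, rep g ≠ [])
    (hrep : ∀ g : G, evalW evA (rep g) = g) :
    -- (1) Z is a local group: for every idempotent e of Z, eZe is a group
    (∀ e ∈ Zset L rep, fcheckX L f evA rep (e ++ e) = e →
      ∀ x : List (A ⊕ A_G),
        (∃ z ∈ Zset L rep, x = fcheckX L f evA rep (e ++ z ++ e)) →
        (fcheckX L f evA rep (e ++ x) = x ∧ fcheckX L f evA rep (x ++ e) = x ∧
          ∃ y : List (A ⊕ A_G),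
            (∃ z ∈ Zset L rep, y = fcheckX L f evA rep (e ++ z ++ e)) ∧
            fcheckX L f evA rep (x ++ y) = e ∧
            fcheckX L f evA rep (y ++ x) = e)) ∧
    -- (2) I = L¹GL¹ is the minimal ideal of Z
    ((Iset L rep).Nonempty ∧ Iset L rep ⊆ Zset L rep ∧
      (∀ z ∈ Zset L rep, ∀ i ∈ Iset L rep,
        fcheckX L f evA rep (z ++ i) ∈ Iset L rep ∧
        fcheckX L f evA rep (i ++ z) ∈ Iset L rep) ∧
      (∀ K : Set (List (A ⊕ A_G)), K ⊆ Zset L rep → K.Nonempty →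
        (∀ z ∈ Zset L rep, ∀ x ∈ K,
          fcheckX L f evA rep (z ++ x) ∈ K ∧
          fcheckX L f evA rep (x ++ z) ∈ K) →
        Iset L rep ⊆ K)) ∧
    -- (3) φ : I → J, ugv ↦ (u, g, v), is an isomorphism onto the Rees matrix
    -- semigroup J = M[G; L¹, L¹; P] with P = (f̂(uv))
    ((∀ p : List A × G × List A, (p.1 ∈ L ∨ p.1 = []) → (p.2.2 ∈ L ∨ p.2.2 = []) →
        wordOf rep p ∈ Iset L rep) ∧
      (∀ p q : List A × G × List A,
        (p.1 ∈ L ∨ p.1 = []) → (p.2.2 ∈ L ∨ p.2.2 = []) →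
        (q.1 ∈ L ∨ q.1 = []) → (q.2.2 ∈ L ∨ q.2.2 = []) →
        wordOf rep p = wordOf rep q → p = q) ∧
      (∀ i ∈ Iset L rep, ∃ p : List A × G × List A,
        (p.1 ∈ L ∨ p.1 = []) ∧ (p.2.2 ∈ L ∨ p.2.2 = []) ∧ wordOf rep p = i) ∧
      (∀ p q : List A × G × List A,
        (p.1 ∈ L ∨ p.1 = []) → (p.2.2 ∈ L ∨ p.2.2 = []) →
        (q.1 ∈ L ∨ q.1 = []) → (q.2.2 ∈ L ∨ q.2.2 = []) →
        fcheckX L f evA rep (wordOf rep p ++ wordOf rep q) =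
          wordOf rep (reesMul L f p q))) ∧
    -- (4) the Rees quotient Z/I = L ∪ {0} is nilpotent: no element of Z
    -- outside I is idempotent
    (∀ z ∈ Zset L rep, z ∉ Iset L rep → fcheckX L f evA rep (z ++ z) ≠ z) := by
  
  classical
  have hmul := fcheck_wordOf_mul L f evA hE hFac hrepne hrep
  have hinj : ∀ {p q : List A × G × List A},
      wordOf rep p = wordOf rep q → p = q := fun h => wordOf_inj evA hrepne hrep h
  have hL1 := fun {w : List A} (hw : w ∈ L ∨ w = []) => scL_L1 L f hE hFac hw
  have hWm := fun {w : List A} (hw : w ≠ []) => word_mem_of_ne L hE hFac hA hw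
  have hmemL_ne : ∀ {w : List A}, w ∈ L → w ≠ [] := fun hw h => hE (h ▸ hw)
  -- (3a)
  have h3a : ∀ p : List A × G × List A, (p.1 ∈ L ∨ p.1 = []) →
      (p.2.2 ∈ L ∨ p.2.2 = []) → wordOf rep p ∈ Iset L rep :=
    fun p h1 h2 => ⟨p.1, p.2.1, p.2.2, h1, h2, rfl⟩
  have hIZ : Iset L rep ⊆ Zset L rep := fun w hw => Or.inr hw
  -- (2c) closure
  have h2c : ∀ z ∈ Zset L rep, ∀ i ∈ Iset L rep,
      fcheckX L f evA rep (z ++ i) ∈ Iset L rep ∧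
      fcheckX L f evA rep (i ++ z) ∈ Iset L rep := by
    intro z hz i hi
    obtain ⟨u, g, v, hu, hv, rfl⟩ := hi
    rcases hz with ⟨w, hwL, rfl⟩ | ⟨u', g', v', hu', hv', rfl⟩
    · constructor
      · have harg : List.map Sum.inl w ++
            (List.map Sum.inl u ++ List.map Sum.inr (rep g) ++ List.map Sum.inl v)
            = (w ++ u).map Sum.inl ++
              ((rep g).map Sum.inr ++ v.map Sum.inl) := by
          simp [List.append_assoc]
        rw [harg, fcheck_seg1 L f evA hE hrepne hrep]
        obtain ⟨-, -, haw, hag⟩ := hL1 hv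
        rw [haw, hag]
        exact ⟨graveWord L (w ++ u), _, v,
          Or.inl (hWm (by simp [hmemL_ne hwL])).1, hv, rfl⟩
      · have harg : (List.map Sum.inl u ++ List.map Sum.inr (rep g) ++ List.map Sum.inl v)
            ++ List.map Sum.inl w
            = u.map Sum.inl ++ ((rep g).map Sum.inr ++ (v ++ w).map Sum.inl) := by
          simp [List.append_assoc]
        rw [harg, fcheck_seg1 L f evA hE hrepne hrep]
        obtain ⟨hgw, hgg, -, -⟩ := hL1 hu
        rw [hgw, hgg]
        exact ⟨u, _, acuteWord L (v ++ w), hu,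
          Or.inl (hWm (by simp [hmemL_ne hwL])).2, rfl⟩
    · constructor
      · rw [show (List.map Sum.inl u' ++ List.map Sum.inr (rep g') ++ List.map Sum.inl v')
            ++ (List.map Sum.inl u ++ List.map Sum.inr (rep g) ++ List.map Sum.inl v)
            = wordOf rep (u', g', v') ++ wordOf rep (u, g, v) from rfl,
          hmul (u', g', v') (u, g, v) hu' hv]
        exact h3a _ hu' hv
      · rw [show (List.map Sum.inl u ++ List.map Sum.inr (rep g) ++ List.map Sum.inl v)
            ++ (List.map Sum.inl u' ++ List.map Sum.inr (rep g') ++ List.map Sum.inl v')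
            = wordOf rep (u, g, v) ++ wordOf rep (u', g', v') from rfl,
          hmul (u, g, v) (u', g', v') hu hv']
        exact h3a _ hu hv'
  refine ⟨?_, ⟨⟨wordOf rep ([], (1 : G), []), h3a _ (Or.inr rfl) (Or.inr rfl)⟩,
    hIZ, h2c, ?_⟩, ⟨h3a, fun p q _ _ _ _ h => hinj h,
    fun i hi => by obtain ⟨u, g, v, hu, hv, hw⟩ := hi
                   exact ⟨(u, g, v), hu, hv, hw.symm⟩,
    fun p q hp1 _ _ hq2 => hmul p q hp1 hq2⟩, ?_⟩
  · -- (1) local group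
    intro e heZ hee x hx
    have heI : e ∈ Iset L rep := by
      rcases heZ with ⟨w, hwL, rfl⟩ | h
      · exact absurd hee (pure_sq_ne L f evA hE hFac hA hrepne hwL)
      · exact h
    obtain ⟨u, g, v, hu, hv, he0⟩ := heI
    have he' : e = wordOf rep (u, g, v) := he0
    have hgw := (hL1 hu).1
    have hgg := (hL1 hu).2.1
    have haw := (hL1 hv).2.2.1
    have hag := (hL1 hv).2.2.2
    rw [he'] at hee
    rw [hmul (u, g, v) (u, g, v) hu hv,
      show reesMul L f (u, g, v) (u, g, v) = (u, g * fhat L f (v ++ u) * g, v) from rfl]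
      at hee
    have h2 : g * fhat L f (v ++ u) * g = g := congrArg (fun t => t.2.1) (hinj hee)
    have h3 : fhat L f (v ++ u) * g = 1 :=
      mul_left_cancel (a := g) (by rw [← mul_assoc, h2, mul_one])
    have hg : g = (fhat L f (v ++ u))⁻¹ := eq_inv_of_mul_eq_one_right h3
    obtain ⟨z, hzZ, hxe⟩ := hx
    rw [he'] at hxe
    have hxform : ∃ h0 : G, x = wordOf rep (u, h0, v) := by
      rcases hzZ with ⟨w, hwL, rfl⟩ | ⟨u₂, g₂, v₂, hu₂, hv₂, rfl⟩
      · refine ⟨(1 : G) * (g * (fhat L f (v ++ w ++ u) * (g * 1))), ?_⟩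
        rw [hxe]
        have harg : wordOf rep (u, g, v) ++ List.map Sum.inl w ++ wordOf rep (u, g, v)
            = u.map Sum.inl ++ ((rep g).map Sum.inr ++
              ((v ++ w ++ u).map Sum.inl ++ ((rep g).map Sum.inr ++ v.map Sum.inl))) := by
          simp [wordOf, List.append_assoc]
        rw [harg, fcheck_seg2 L f evA hE hrepne hrep, hgw, hgg, haw, hag]
        exact rfl
      · refine ⟨(1 : G) * (g * (fhat L f (v ++ u₂) * (g₂ * (fhat L f (v₂ ++ u) * (g * 1))))), ?_⟩
        rw [hxe]
        have harg : wordOf rep (u, g, v) ++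
            (List.map Sum.inl u₂ ++ List.map Sum.inr (rep g₂) ++ List.map Sum.inl v₂)
            ++ wordOf rep (u, g, v)
            = u.map Sum.inl ++ ((rep g).map Sum.inr ++
              ((v ++ u₂).map Sum.inl ++ ((rep g₂).map Sum.inr ++
                ((v₂ ++ u).map Sum.inl ++ ((rep g).map Sum.inr ++ v.map Sum.inl))))) := by
          simp [wordOf, List.append_assoc]
        rw [harg, fcheck_seg3 L f evA hE hrepne hrep, hgw, hgg, haw, hag]
        exact rfl
    obtain ⟨h0, hx0⟩ := hxform
    subst hx0
    refine ⟨?_, ?_, ?_⟩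
    · rw [he', hmul (u, g, v) (u, h0, v) hu hv,
        show reesMul L f (u, g, v) (u, h0, v) = (u, g * fhat L f (v ++ u) * h0, v) from rfl,
        show g * fhat L f (v ++ u) * h0 = h0 by rw [hg]; group]
    · rw [he', hmul (u, h0, v) (u, g, v) hu hv,
        show reesMul L f (u, h0, v) (u, g, v) = (u, h0 * fhat L f (v ++ u) * g, v) from rfl,
        show h0 * fhat L f (v ++ u) * g = h0 by rw [hg]; group]
    · refine ⟨wordOf rep (u, (fhat L f (v ++ u))⁻¹ * h0⁻¹ * (fhat L f (v ++ u))⁻¹, v),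
        ⟨wordOf rep (u, (fhat L f (v ++ u))⁻¹ * h0⁻¹ * (fhat L f (v ++ u))⁻¹, v),
          Or.inr (h3a _ hu hv), ?_⟩, ?_, ?_⟩
      · rw [he']
        have harg : wordOf rep (u, g, v) ++
            wordOf rep (u, (fhat L f (v ++ u))⁻¹ * h0⁻¹ * (fhat L f (v ++ u))⁻¹, v)
            ++ wordOf rep (u, g, v)
            = u.map Sum.inl ++ ((rep g).map Sum.inr ++
              ((v ++ u).map Sum.inl ++
                ((rep ((fhat L f (v ++ u))⁻¹ * h0⁻¹ * (fhat L f (v ++ u))⁻¹)).map Sum.inr ++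
                ((v ++ u).map Sum.inl ++ ((rep g).map Sum.inr ++ v.map Sum.inl))))) := by
          simp [wordOf, List.append_assoc]
        rw [harg, fcheck_seg3 L f evA hE hrepne hrep, hgw, hgg, haw, hag]
        rw [show (1 : G) * (g * (fhat L f (v ++ u) *
            ((fhat L f (v ++ u))⁻¹ * h0⁻¹ * (fhat L f (v ++ u))⁻¹ *
              (fhat L f (v ++ u) * (g * 1)))))
            = (fhat L f (v ++ u))⁻¹ * h0⁻¹ * (fhat L f (v ++ u))⁻¹ by rw [hg]; group]
        exact rfl
      · rw [he', hmul (u, h0, v) _ hu hv,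
          show reesMul L f (u, h0, v)
            (u, (fhat L f (v ++ u))⁻¹ * h0⁻¹ * (fhat L f (v ++ u))⁻¹, v)
            = (u, h0 * fhat L f (v ++ u) *
              ((fhat L f (v ++ u))⁻¹ * h0⁻¹ * (fhat L f (v ++ u))⁻¹), v) from rfl,
          show h0 * fhat L f (v ++ u) *
              ((fhat L f (v ++ u))⁻¹ * h0⁻¹ * (fhat L f (v ++ u))⁻¹) = g by rw [hg]; group]
      · rw [he', hmul _ (u, h0, v) hu hv,
          show reesMul L f
            (u, (fhat L f (v ++ u))⁻¹ * h0⁻¹ * (fhat L f (v ++ u))⁻¹, v) (u, h0, v)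
            = (u, (fhat L f (v ++ u))⁻¹ * h0⁻¹ * (fhat L f (v ++ u))⁻¹ *
                fhat L f (v ++ u) * h0, v) from rfl,
          show (fhat L f (v ++ u))⁻¹ * h0⁻¹ * (fhat L f (v ++ u))⁻¹ *
                fhat L f (v ++ u) * h0 = g by rw [hg]; group]
  · -- (2d) minimality
    intro K hKZ hKne hcl i hi
    obtain ⟨x₀, hx₀⟩ := hKne
    obtain ⟨u, g, v, hu, hv, hi0⟩ := hi
    have h1 : fcheckX L f evA rep (wordOf rep ([], (1:G), []) ++ x₀) ∈ K :=
      (hcl _ (hIZ (h3a _ (Or.inr rfl) (Or.inr rfl))) x₀ hx₀).1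
    have hy : ∃ (h₁ : G) (v₁ : List A), (v₁ ∈ L ∨ v₁ = []) ∧
        fcheckX L f evA rep (wordOf rep ([], (1:G), []) ++ x₀)
          = wordOf rep ([], h₁, v₁) := by
      rcases hKZ hx₀ with ⟨w, hwL, rfl⟩ | ⟨u₂, g₂, v₂, hu₂, hv₂, rfl⟩
      · refine ⟨graveG L f [] * (1 * acuteG L f w), acuteWord L w,
          Or.inl (hWm (hmemL_ne hwL)).2, ?_⟩
        have harg : wordOf rep ([], (1:G), []) ++ List.map Sum.inl w
            = ([] : List A).map Sum.inl ++ ((rep (1:G)).map Sum.inr ++ w.map Sum.inl) := by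
          simp [wordOf]
        rw [harg, fcheck_seg1 L f evA hE hrepne hrep,
          (hL1 (Or.inr rfl : ([] : List A) ∈ L ∨ ([] : List A) = [])).1]
        rfl
      · exact ⟨(1 : G) * fhat L f ([] ++ u₂) * g₂, v₂, hv₂,
          hmul ([], (1:G), []) (u₂, g₂, v₂) (Or.inr rfl) hv₂⟩
    obtain ⟨h₁, v₁, hv₁, heq⟩ := hy
    rw [heq] at h1
    have h2 : fcheckX L f evA rep (wordOf rep ([], h₁, v₁) ++
        wordOf rep ([], (h₁ * fhat L f (v₁ ++ []))⁻¹, [])) ∈ K :=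
      (hcl _ (hIZ (h3a _ (Or.inr rfl) (Or.inr rfl))) _ h1).2
    rw [hmul ([], h₁, v₁) ([], (h₁ * fhat L f (v₁ ++ []))⁻¹, []) (Or.inr rfl) (Or.inr rfl),
      show reesMul L f ([], h₁, v₁) ([], (h₁ * fhat L f (v₁ ++ []))⁻¹, [])
        = ([], h₁ * fhat L f (v₁ ++ []) * (h₁ * fhat L f (v₁ ++ []))⁻¹, []) from rfl,
      show h₁ * fhat L f (v₁ ++ []) * (h₁ * fhat L f (v₁ ++ []))⁻¹ = 1 by group] at h2
    have h3 : fcheckX L f evA rep (wordOf rep (u, g, []) ++ wordOf rep ([], (1:G), [])) ∈ K :=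
      (hcl _ (hIZ (h3a (u, g, []) hu (Or.inr rfl))) _ h2).1
    rw [hmul (u, g, []) ([], (1:G), []) hu (Or.inr rfl),
      show reesMul L f (u, g, []) ([], (1:G), [])
        = (u, g * fhat L f ([] ++ []) * 1, []) from rfl,
      show g * fhat L f ([] ++ []) * 1 = g by
        rw [show ([] ++ [] : List A) = [] from rfl, fhat_nil f hE, mul_one, mul_one]] at h3
    have h4 : fcheckX L f evA rep (wordOf rep (u, g, []) ++ wordOf rep ([], (1:G), v)) ∈ K :=
      (hcl _ (hIZ (h3a ([], (1:G), v) (Or.inr rfl) hv)) _ h3).2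
    rw [hmul (u, g, []) ([], (1:G), v) hu hv,
      show reesMul L f (u, g, []) ([], (1:G), v)
        = (u, g * fhat L f ([] ++ []) * 1, v) from rfl,
      show g * fhat L f ([] ++ []) * 1 = g by
        rw [show ([] ++ [] : List A) = [] from rfl, fhat_nil f hE, mul_one, mul_one]] at h4
    rw [hi0]
    exact h4
  · -- (4)
    intro z hz hzI
    rcases hz with ⟨w, hwL, rfl⟩ | hzi
    · exact pure_sq_ne L f evA hE hFac hA hrepne hwL
    · exact absurd hzi hzI
end

section
/- The map φ : M_k(G, ħ) → S'_k(G, f) defined by φ(v, 1_G, v) = [v] for v ∈ A^{≤k−1} and φ(u₁, g, u₂) = [u₁ w_g u₂] for u₁, u₂ ∈ A^k and g ∈ G (w_g ∈ A_G⁺ the chosen representative word of g, [·] the ρ_{R'}-class) is an injective semigroup homomorphism from M_k(G, ħ) into S'_k(G, f). -/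
open List

variable {A : Type*} {G : Type*} {A_G : Type*}

/-- The smallest (semigroup) congruence on words containing the relation `R`. -/
inductive Cong {X : Type*} (R : List X → List X → Prop) : List X → List X → Prop
  | of {u v : List X} : R u v → Cong R u v
  | refl (u : List X) : Cong R u u
  | symm {u v : List X} : Cong R u v → Cong R v u
  | trans {u v w : List X} : Cong R u v → Cong R v w → Cong R u w
  | left (w : List X) {u v : List X} : Cong R u v → Cong R (w ++ u) (w ++ v)
  | right (w : List X) {u v : List X} : Cong R u v → Cong R (u ++ w) (v ++ w)

section CoreRel
variable [Group G]

/-- The relation `R = R_G ∪ R_f` over `X = A ⊕ A_G`, where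
`R_f = {eue = f(u) : u ∈ L} ∪ {v̈ = v̈_α f(v̈) v̈_ω : v̈ ∈ L̈}`,
`e = rep 1` the chosen word representing `1_G`, group elements
read as their representative words. -/
inductive RelR (L : Set (List A)) (RG : List A_G → List A_G → Prop)
    (f : List A → G) (rep : G → List A_G) :
    List (A ⊕ A_G) → List (A ⊕ A_G) → Prop
  | ofG {u v : List A_G} : RG u v → RelR L RG f rep (u.map Sum.inr) (v.map Sum.inr)
  | rU {u : List A} (hu : u ∈ L) :
      RelR L RG f rep
        ((rep 1).map Sum.inr ++ u.map Sum.inl ++ (rep 1).map Sum.inr)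
        ((rep (f u)).map Sum.inr)
  | rV {v : List A} (hv : v ∈ Ddot L) :
      RelR L RG f rep (v.map Sum.inl)
        (v.dropLast.map Sum.inl ++ (rep (f v)).map Sum.inr ++ v.tail.map Sum.inl)

end CoreRel

/-- `L_k = A^{≤k}`: the (factorial) language of all non-empty words over `A` of
length at most `k`. -/
def Lk (A : Type*) (k : ℕ) : Set (List A) := {w | w ≠ [] ∧ w.length ≤ k}

section UEUsec
variable [Group G]

/-- The extra relations `u = ueu` (`u ∈ A^k`), `e = rep 1` the chosen word
representing `1_G`. -/
def UEU (k : ℕ) (rep : G → List A_G) :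
    List (A ⊕ A_G) → List (A ⊕ A_G) → Prop := fun y w =>
  ∃ u : List A, u.length = k ∧ y = u.map Sum.inl ∧
    w = u.map Sum.inl ++ (rep (1 : G)).map Sum.inr ++ u.map Sum.inl

/-- The relation `R' = R_G ∪ R_f ∪ {u = ueu : u ∈ A^k}`. -/
def RelR' (L : Set (List A)) (RG : List A_G → List A_G → Prop)
    (f : List A → G) (rep : G → List A_G) (k : ℕ) :
    List (A ⊕ A_G) → List (A ⊕ A_G) → Prop := fun y w =>
  RelR L RG f rep y w ∨ UEU k rep y w

end UEUsec

section Stmt16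
variable [Group G]

/-- The carrier of `M_k(G, ħ) = {(v, 1_G, v) : v ∈ A^{≤k−1}} ∪ (A^k × G × A^k)`. -/
def memM (k : ℕ) (p : List A × G × List A) : Prop :=
  (p.2.1 = 1 ∧ p.2.2 = p.1 ∧ p.1 ≠ [] ∧ p.1.length ≤ k - 1) ∨
  (p.1.length = k ∧ p.2.2.length = k)

/-- Multiplication of `M_k(G, ħ)`:
`(u, g, v)(u', g', v') = (i_k(uu'), g·ħ(vu')·g', t_k(vv'))`, where `i_k`
(resp. `t_k`) is the longest prefix (resp. suffix) of length at most `k`. -/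
def mulM (k : ℕ) (hb : List A → G) (p q : List A × G × List A) :
    List A × G × List A :=
  ((p.1 ++ q.1).take k,
   p.2.1 * hb (p.2.2 ++ q.1) * q.2.1,
   (p.2.2 ++ q.2.2).drop ((p.2.2 ++ q.2.2).length - k))

/-- The map `φ : M_k(G, ħ) → S'_k(G, f)`: `φ(v, 1_G, v) = [v]` for
`v ∈ A^{≤k−1}` and `φ(u₁, g, u₂) = [u₁ w_g u₂]` for `u₁, u₂ ∈ A^k`, `g ∈ G`
(`w_g = rep g` the chosen representative word of `g`), described on word
representatives. -/
def phiWord (k : ℕ) (rep : G → List A_G) (p : List A × G × List A) :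
    List (A ⊕ A_G) :=
  if p.1.length < k then p.1.map Sum.inl
  else p.1.map Sum.inl ++ (rep p.2.1).map Sum.inr ++ p.2.2.map Sum.inl

end Stmt16
/-!
Two consequences of `R'` do all the work in `S'_k(G, f)`. The relation `u = ueu` (`u ∈ A^k`)
turns a word `m` with `|m| ≥ k` into `i_k(m) e m` and into `m e t_k(m)`. And
`w_g w w_{g'} = w_{g ħ(w) g'}` for every `w ∈ A⁺`, by induction on `|w|`: rewrite the prefix
`v̈ ∈ A^{k+1}` of `w` by `v̈ = v̈_α f(v̈) v̈_ω` and recombine with `ħ(v̈ w') = ħ(v̈) ħ(v̈_ω w')`.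
Together they give `φ(p) φ(q) = φ(pq)`.

For injectivity, words of `X⁺` are evaluated in an explicit semigroup extending `M_k(G, ħ)` by
triples with short ends. Its associativity is the superposition law, every relation of `R'`
holds in it, and `φ(p)` evaluates to `p` itself.
-/

namespace Cong
variable {X : Type*} {R : List X → List X → Prop} {u v : List X}

theorem append {u' v' : List X} (hu : Cong R u u') (hv : Cong R v v') :
    Cong R (u ++ v) (u' ++ v') :=
  (hu.right v).trans (hv.left u')

theorem apply_eq {M : Type*} [Mul M] (F : List X → M) (hF : ∀ u v, F (u ++ v) = F u * F v)
    (hR : ∀ u v, R u v → F u = F v) (h : Cong R u v) : F u = F v := by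
  induction h with
  | of h => exact hR _ _ h
  | refl => rfl
  | symm _ ih => exact ih.symm
  | trans _ _ ih₁ ih₂ => exact ih₁.trans ih₂
  | left w _ ih => rw [hF, hF, ih]
  | right w _ ih => rw [hF, hF, ih]

def con (R : List X → List X → Prop) : Con (FreeMonoid X) where
  r u v := Cong R u.toList v.toList
  iseqv := ⟨fun _ ↦ .refl _, .symm, .trans⟩
  mul' := Cong.append

def mk (R : List X → List X → Prop) (w : List X) : (Cong.con R).Quotient :=
  (FreeMonoid.ofList w : FreeMonoid X)

theorem mk_eq_mk_iff : mk R u = mk R v ↔ Cong R u v := (Cong.con R).eq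

theorem mk_append (u v : List X) : mk R (u ++ v) = mk R u * mk R v := rfl

theorem mk_eq_mk_of_rel (h : R u v) : mk R u = mk R v := mk_eq_mk_iff.2 (.of h)

theorem map {Y : Type*} {S : List Y → List Y → Prop} (f : X → Y)
    (hf : ∀ u v, R u v → S (u.map f) (v.map f)) (h : Cong R u v) :
    Cong S (u.map f) (v.map f) :=
  mk_eq_mk_iff.1 <| h.apply_eq (fun w ↦ mk S (w.map f))
    (fun u v ↦ by rw [List.map_append, mk_append]) fun u v huv ↦ mk_eq_mk_of_rel (hf u v huv)

end Cong

namespace List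
variable {α : Type*} (k : ℕ) (a b : List α)

theorem take_append_take : (a ++ b.take k).take k = (a ++ b).take k := by
  simp [take_append, take_take]

theorem length_rtake_le : (a.rtake k).length ≤ k := by
  simp only [rtake, length_drop]
  omega

theorem rtake_of_length_le {a : List α} (h : a.length ≤ k) : a.rtake k = a := by
  simp [rtake, Nat.sub_eq_zero_of_le h]

theorem rtake_append_of_le_length {b : List α} (h : k ≤ b.length) :
    (a ++ b).rtake k = b.rtake k := by
  simp only [rtake, drop_append, length_append]
  rw [drop_eq_nil_of_le (by omega), nil_append]
  congr 1
  omega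

theorem rtake_rtake_append : (a.rtake k ++ b).rtake k = (a ++ b).rtake k := by
  simp only [rtake_eq_reverse_take_reverse, reverse_append, reverse_reverse, take_append_take]

end List

theorem mem_Ddot_Lk_iff {k : ℕ} (hk : 1 ≤ k) {v : List A} :
    v ∈ Ddot (Lk A k) ↔ v.length = k + 1 := by
  simp only [Ddot, Lk, Set.mem_ofPred_eq, ← List.length_pos_iff, List.length_dropLast,
    List.length_tail]
  omega

structure SuperpositionHom (k : ℕ) (A G : Type*) [Group G] where
  toFun : List A → G
  map_of_length_le' : ∀ w : List A, w.length ≤ k → toFun w = 1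
  map_append_rtake' : ∀ u v : List A, toFun (u ++ v) = toFun u * toFun (u.rtake k ++ v)
  map_append_take' : ∀ u v : List A, toFun (u ++ v) = toFun (u ++ v.take k) * toFun v

namespace SuperpositionHom
variable {k : ℕ} [Group G]

instance : CoeFun (SuperpositionHom k A G) fun _ ↦ List A → G := ⟨toFun⟩

def ofNonempty (hb : List A → G) (hb1 : ∀ w : List A, w.length ≤ k → hb w = 1)
    (hb2 : ∀ u v : List A, u ≠ [] → v ≠ [] →
      hb (u ++ v) = hb u * hb (u.drop (u.length - k) ++ v) ∧
      hb (u ++ v) = hb (u ++ v.take k) * hb v) : SuperpositionHom k A G where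
  toFun := hb
  map_of_length_le' := hb1
  map_append_rtake' u v := by
    rcases eq_or_ne u [] with rfl | hu
    · simp [hb1 [] (by simp)]
    rcases eq_or_ne v [] with rfl | hv
    · simp [hb1 (u.rtake k) (List.length_rtake_le k u)]
    exact (hb2 u v hu hv).1
  map_append_take' u v := by
    rcases eq_or_ne v [] with rfl | hv
    · simp [hb1 [] (by simp)]
    rcases eq_or_ne u [] with rfl | hu
    · simp [hb1 (v.take k) (by simp)]
    exact (hb2 u v hu hv).2

variable (h : SuperpositionHom k A G)

theorem map_of_length_le {w : List A} (hw : w.length ≤ k) : h w = 1 :=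
  h.map_of_length_le' w hw

@[simp] theorem map_nil : h [] = 1 := h.map_of_length_le (by simp)

@[simp] theorem map_rtake (w : List A) : h (w.rtake k) = 1 :=
  h.map_of_length_le (List.length_rtake_le k w)

@[simp] theorem mul_map_rtake_append (u v : List A) : h u * h (u.rtake k ++ v) = h (u ++ v) :=
  (h.map_append_rtake' u v).symm

@[simp] theorem map_append_take_mul (u v : List A) : h (u ++ v.take k) * h v = h (u ++ v) :=
  (h.map_append_take' u v).symm

theorem mul_map_mul_map_rtake_append (g : G) (u v : List A) :
    g * h u * h (u.rtake k ++ v) = g * h (u ++ v) := by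
  rw [mul_assoc, mul_map_rtake_append]

theorem mul_map_append_take_mul_map (g : G) (u v : List A) :
    g * h (u ++ v.take k) * h v = g * h (u ++ v) := by
  rw [mul_assoc, map_append_take_mul]

/-- `word w` stands for a word `w ∈ A⁺` with `|w| < k`. `triple u g v` stands for a word of `X⁺`
that is longer or contains a letter of `A_G`: `u` and `v` are its longest prefix and suffix over `A`
of length at most `k`, and `g` is its value, maximal factors over `A` being evaluated by `ħ`. -/
inductive Model (h : SuperpositionHom k A G)
  | word : List A → Model h
  | triple : List A → G → List A → Model h

namespace Model
open Model (word triple)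

def ofWord (w : List A) : h.Model :=
  if w.length < k then word w else triple (w.take k) (h w) (w.rtake k)

instance : Mul h.Model where
  mul
  | word w, word w' => ofWord h (w ++ w')
  | word w, triple u g v => triple ((w ++ u).take k) (h (w ++ u) * g) v
  | triple u g v, word w => triple u (g * h (v ++ w)) ((v ++ w).rtake k)
  | triple u g v, triple u' g' v' => triple u (g * h (v ++ u') * g') v'

variable {h}

@[simp] theorem word_mul_word (w w' : List A) :
    (word w * word w' : h.Model) = ofWord h (w ++ w') := rfl

@[simp] theorem word_mul_triple (w u : List A) (g : G) (v : List A) :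
    (word w * triple u g v : h.Model) = triple ((w ++ u).take k) (h (w ++ u) * g) v := rfl

@[simp] theorem triple_mul_word (u : List A) (g : G) (v w : List A) :
    (triple u g v * word w : h.Model) = triple u (g * h (v ++ w)) ((v ++ w).rtake k) := rfl

@[simp] theorem triple_mul_triple (u : List A) (g : G) (v u' : List A) (g' : G) (v' : List A) :
    (triple u g v * triple u' g' v' : h.Model) = triple u (g * h (v ++ u') * g') v' := rfl

theorem ofWord_of_length_lt {w : List A} (hw : w.length < k) : ofWord h w = word w := if_pos hw

theorem ofWord_of_le_length {w : List A} (hw : k ≤ w.length) :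
    ofWord h w = triple (w.take k) (h w) (w.rtake k) := if_neg (by omega)

theorem ofWord_of_length_eq {u : List A} (hu : u.length = k) : ofWord h u = triple u 1 u := by
  rw [ofWord_of_le_length hu.ge, List.take_of_length_le hu.le, List.rtake_of_length_le _ hu.le,
    h.map_of_length_le hu.le]

theorem ofWord_mul_word (w w' : List A) : ofWord h w * word w' = ofWord h (w ++ w') := by
  rcases lt_or_ge w.length k with hw | hw
  · rw [ofWord_of_length_lt hw, word_mul_word]
  · rw [ofWord_of_le_length hw, ofWord_of_le_length (by simp; omega), triple_mul_word,
      mul_map_rtake_append, List.rtake_rtake_append, List.take_append_of_le_length hw]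

theorem word_mul_ofWord (w w' : List A) : word w * ofWord h w' = ofWord h (w ++ w') := by
  rcases lt_or_ge w'.length k with hw | hw
  · rw [ofWord_of_length_lt hw, word_mul_word]
  · rw [ofWord_of_le_length hw, ofWord_of_le_length (by simp; omega), word_mul_triple,
      map_append_take_mul, List.take_append_take, List.rtake_append_of_le_length _ _ hw]

theorem triple_mul_ofWord (u : List A) (g : G) (v w : List A) :
    triple u g v * ofWord h w = triple u (g * h (v ++ w)) ((v ++ w).rtake k) := by
  rcases lt_or_ge w.length k with hw | hw
  · rw [ofWord_of_length_lt hw, triple_mul_word]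
  · rw [ofWord_of_le_length hw, triple_mul_triple, mul_assoc, map_append_take_mul,
      List.rtake_append_of_le_length _ _ hw]

theorem ofWord_mul_triple (w u : List A) (g : G) (v : List A) :
    ofWord h w * triple u g v = triple ((w ++ u).take k) (h (w ++ u) * g) v := by
  rcases lt_or_ge w.length k with hw | hw
  · rw [ofWord_of_length_lt hw, word_mul_triple]
  · rw [ofWord_of_le_length hw, triple_mul_triple, mul_map_rtake_append,
      List.take_append_of_le_length hw]

theorem ofWord_append (u v : List A) : ofWord h (u ++ v) = ofWord h u * ofWord h v := by
  rcases lt_or_ge u.length k with hu | hu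
  · rw [ofWord_of_length_lt hu, word_mul_ofWord]
  · rw [ofWord_of_le_length hu, triple_mul_ofWord, ofWord_of_le_length (by simp; omega),
      mul_map_rtake_append, List.rtake_rtake_append, List.take_append_of_le_length hu]

instance : Semigroup h.Model where
  mul_assoc x y z := by
    rcases x with w | ⟨u, g, v⟩ <;> rcases y with w' | ⟨u', g', v'⟩ <;>
      rcases z with w'' | ⟨u'', g'', v''⟩ <;>
      simp only [word_mul_word, word_mul_triple, triple_mul_word, triple_mul_triple,
        ofWord_mul_word, word_mul_ofWord, triple_mul_ofWord, ofWord_mul_triple, ← mul_assoc,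
        mul_map_mul_map_rtake_append, mul_map_append_take_mul_map, map_append_take_mul,
        List.take_append_take, List.rtake_rtake_append, List.append_assoc]

theorem triple_nil_mul_ofWord_mul_triple_nil (g : G) (w : List A) (g' : G) :
    triple [] g [] * ofWord h w * triple [] g' [] = triple [] (g * h w * g') [] := by
  simp [triple_mul_ofWord]

theorem ofWord_mul_triple_nil_mul_ofWord (u : List A) (g : G) (v : List A) :
    ofWord h u * triple [] g [] * ofWord h v = triple (u.take k) (h u * g * h v) (v.rtake k) := by
  simp [ofWord_mul_triple, triple_mul_ofWord]

theorem ofWord_of_length_eq_succ {v : List A} (hlen : v.length = k + 1) :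
    ofWord h v = ofWord h v.dropLast * triple [] (h v) [] * ofWord h v.tail := by
  rw [ofWord_mul_triple_nil_mul_ofWord, ofWord_of_le_length (by omega),
    h.map_of_length_le (w := v.dropLast) (by simp [hlen]),
    h.map_of_length_le (w := v.tail) (by simp [hlen]), one_mul, mul_one,
    List.take_of_length_le (l := v.dropLast) (by simp [hlen]),
    List.rtake_of_length_le (a := v.tail) _ (by simp [hlen]),
    List.dropLast_eq_take, List.rtake, ← List.drop_one]
  simp [hlen]

end Model

open Model (word triple ofWord)

def toModel (p : List A × G × List A) : h.Model :=
  if p.1.length < k then word p.1 else triple p.1 p.2.1 p.2.2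

theorem toModel_injOn {p q : List A × G × List A} (hp : memM k p) (hq : memM k q)
    (hpq : h.toModel p = h.toModel q) : p = q := by
  obtain ⟨u, g, v⟩ := p
  obtain ⟨u', g', v'⟩ := q
  simp only [memM] at hp hq
  have short : ∀ {w : List A}, w ≠ [] → w.length ≤ k - 1 → w.length < k := fun hw hl ↦ by
    have := List.length_pos_iff.2 hw
    omega
  rcases hp with ⟨rfl, rfl, hne, hlen⟩ | ⟨hu, -⟩ <;>
    rcases hq with ⟨rfl, rfl, hne', hlen'⟩ | ⟨hu', -⟩ <;> unfold toModel at hpq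
  · simpa [if_pos (short hne hlen), if_pos (short hne' hlen')] using hpq
  · simp [if_pos (short hne hlen), if_neg hu'.not_lt] at hpq
  · simp [if_neg hu.not_lt, if_pos (short hne' hlen')] at hpq
  · simpa [if_neg hu.not_lt, if_neg hu'.not_lt] using hpq

variable (evA : A_G → G)

def letter : A ⊕ A_G → h.Model
  | .inl a => ofWord h [a]
  | .inr b => triple [] (evA b) []

def eval (w : List (A ⊕ A_G)) : WithOne h.Model :=
  (w.map fun x ↦ (h.letter evA x : WithOne h.Model)).prod

theorem eval_append (u v : List (A ⊕ A_G)) :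
    h.eval evA (u ++ v) = h.eval evA u * h.eval evA v := by
  simp [eval]

theorem eval_cons (x : A ⊕ A_G) (w : List (A ⊕ A_G)) :
    h.eval evA (x :: w) = h.letter evA x * h.eval evA w := by
  simp [eval]

theorem eval_map_inl {w : List A} (hw : w ≠ []) : h.eval evA (w.map Sum.inl) = ofWord h w := by
  induction w with
  | nil => exact absurd rfl hw
  | cons a t ih =>
    rcases eq_or_ne t [] with rfl | ht
    · simp [eval, letter]
    · rw [List.map_cons, eval_cons, ih ht, letter, ← WithOne.coe_mul, ← Model.ofWord_append]
      rfl

theorem eval_map_inr {u : List A_G} (hu : u ≠ []) :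
    h.eval evA (u.map Sum.inr) = (triple [] (evalW evA u) [] : h.Model) := by
  induction u with
  | nil => exact absurd rfl hu
  | cons b t ih =>
    rcases eq_or_ne t [] with rfl | ht
    · simp [eval, letter, evalW]
    · rw [List.map_cons, eval_cons, ih ht, letter, ← WithOne.coe_mul, Model.triple_mul_triple]
      simp [evalW]

variable {RG : List A_G → List A_G → Prop} {rep : G → List A_G}
  (hrepne : ∀ g : G, rep g ≠ []) (hrep : ∀ g : G, evalW evA (rep g) = g)
include hrepne hrep

theorem eval_map_inr_rep (g : G) :
    h.eval evA ((rep g).map Sum.inr) = (triple [] g [] : h.Model) := by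
  rw [h.eval_map_inr evA (hrepne g), hrep]

theorem eval_phiWord (hk : 1 ≤ k) {p : List A × G × List A} (hp : memM k p) :
    h.eval evA (phiWord k rep p) = h.toModel p := by
  obtain ⟨u, g, v⟩ := p
  simp only [memM] at hp
  rcases hp with ⟨-, -, hne, hlen⟩ | ⟨hu, hv⟩
  · have hlt : u.length < k := by omega
    rw [phiWord, toModel, if_pos hlt, if_pos hlt, h.eval_map_inl evA hne,
      Model.ofWord_of_length_lt hlt]
  · have hne : ∀ {w : List A}, w.length = k → w ≠ [] :=
      fun hw ↦ List.ne_nil_of_length_pos (by omega)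
    rw [phiWord, toModel, if_neg hu.not_lt, if_neg hu.not_lt, eval_append, eval_append,
      h.eval_map_inl evA (hne hu), h.eval_map_inl evA (hne hv),
      h.eval_map_inr_rep evA hrepne hrep, ← WithOne.coe_mul, ← WithOne.coe_mul,
      Model.ofWord_mul_triple_nil_mul_ofWord, List.take_of_length_le hu.le,
      List.rtake_of_length_le _ hv.le, h.map_of_length_le hu.le, h.map_of_length_le hv.le,
      one_mul, mul_one]

variable (hk : 1 ≤ k) (hRGne : ∀ u v : List A_G, RG u v → u ≠ [] ∧ v ≠ [])
  (hpres : ∀ u v : List A_G, u ≠ [] → v ≠ [] → (Cong RG u v ↔ evalW evA u = evalW evA v))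
include hk hRGne hpres

theorem eval_eq_of_relR' {x y : List (A ⊕ A_G)} (hxy : RelR' (Lk A k) RG h rep k x y) :
    h.eval evA x = h.eval evA y := by
  rcases hxy with (⟨hr⟩ | ⟨hu⟩ | @⟨v, hv⟩) | ⟨u, hu, rfl, rfl⟩
  · obtain ⟨hu, hv⟩ := hRGne _ _ hr
    rw [h.eval_map_inr evA hu, h.eval_map_inr evA hv, (hpres _ _ hu hv).1 (.of hr)]
  · simp only [eval_append, h.eval_map_inl evA hu.1, h.eval_map_inr_rep evA hrepne hrep,
      ← WithOne.coe_mul, Model.triple_nil_mul_ofWord_mul_triple_nil, one_mul, mul_one]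
  · have hlen := (mem_Ddot_Lk_iff hk).1 hv
    have hne : ∀ {w : List A}, 0 < w.length → w ≠ [] := List.ne_nil_of_length_pos
    rw [eval_append, eval_append, h.eval_map_inl evA (hne (by omega)),
      h.eval_map_inl evA (hne (by simp; omega)), h.eval_map_inl evA (hne (by simp; omega)),
      h.eval_map_inr_rep evA hrepne hrep, ← WithOne.coe_mul, ← WithOne.coe_mul,
      ← Model.ofWord_of_length_eq_succ hlen]
  · rw [eval_append, eval_append, h.eval_map_inl evA (List.ne_nil_of_length_pos (by omega)),
      h.eval_map_inr_rep evA hrepne hrep, ← WithOne.coe_mul, ← WithOne.coe_mul,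
      Model.ofWord_mul_triple_nil_mul_ofWord, Model.ofWord_of_length_eq hu,
      List.take_of_length_le hu.le, List.rtake_of_length_le _ hu.le, h.map_of_length_le hu.le]
    simp

theorem eval_eq_of_cong {x y : List (A ⊕ A_G)} (hxy : Cong (RelR' (Lk A k) RG h rep k) x y) :
    h.eval evA x = h.eval evA y :=
  hxy.apply_eq _ (h.eval_append evA) fun _ _ ↦ h.eval_eq_of_relR' evA hrepne hrep hk hRGne hpres

end SuperpositionHom

section Presentation
variable [Group G] {k : ℕ} (h : SuperpositionHom k A G) {RG : List A_G → List A_G → Prop}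
  {evA : A_G → G} {rep : G → List A_G}

local notation "𝔴" w:max => Cong.mk (RelR' (Lk A k) RG h rep k) (List.map Sum.inl w)
local notation "𝔤" g:max => Cong.mk (RelR' (Lk A k) RG h rep k) (List.map Sum.inr (rep g))

theorem mk_phiWord (p : List A × G × List A) :
    Cong.mk (RelR' (Lk A k) RG h rep k) (phiWord k rep p) =
      if p.1.length < k then 𝔴 p.1 else 𝔴 p.1 * 𝔤 p.2.1 * 𝔴 p.2.2 := by
  unfold phiWord
  split_ifs <;> rfl

theorem mk_map_inl_append (u v : List A) : 𝔴 (u ++ v) = 𝔴 u * 𝔴 v := by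
  rw [List.map_append, Cong.mk_append]

theorem mk_map_inl_of_length_eq {u : List A} (hu : u.length = k) :
    𝔴 u = 𝔴 u * 𝔤 1 * 𝔴 u := by
  simp only [← Cong.mk_append]
  exact Cong.mk_eq_mk_of_rel (Or.inr ⟨u, hu, rfl, rfl⟩)

theorem mk_rep_one_mul_mul_rep_one {u : List A} (hu : u ∈ Lk A k) :
    𝔤 1 * 𝔴 u * 𝔤 1 = 𝔤 (h u) := by
  simp only [← Cong.mk_append]
  exact Cong.mk_eq_mk_of_rel (Or.inl (RelR.rU hu))

theorem mk_map_inl_of_mem_Ddot {v : List A} (hv : v ∈ Ddot (Lk A k)) :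
    𝔴 v = 𝔴 v.dropLast * 𝔤 (h v) * 𝔴 v.tail := by
  simp only [← Cong.mk_append]
  exact Cong.mk_eq_mk_of_rel (Or.inl (RelR.rV hv))

theorem mk_map_inl_eq_take_mul {m : List A} (hm : k ≤ m.length) :
    𝔴 m = 𝔴 (m.take k) * 𝔤 1 * 𝔴 m := by
  conv_lhs => rw [← List.take_append_drop k m, mk_map_inl_append,
    mk_map_inl_of_length_eq h (List.length_take_of_le hm)]
  rw [mul_assoc _ (𝔴 _), ← mk_map_inl_append, List.take_append_drop]

theorem mk_map_inl_eq_mul_rtake {m : List A} (hm : k ≤ m.length) :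
    𝔴 m = 𝔴 m * 𝔤 1 * 𝔴 (m.rtake k) := by
  have hlen : (m.rtake k).length = k := by simp [List.rtake]; omega
  conv_lhs => rw [← List.take_append_drop (m.length - k) m, mk_map_inl_append, ← List.rtake,
    mk_map_inl_of_length_eq h hlen]
  rw [← mul_assoc, ← mul_assoc, ← mk_map_inl_append, List.rtake, List.take_append_drop]

variable (hpres : ∀ u v : List A_G, u ≠ [] → v ≠ [] → (Cong RG u v ↔ evalW evA u = evalW evA v))
  (hrepne : ∀ g : G, rep g ≠ []) (hrep : ∀ g : G, evalW evA (rep g) = g)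
include hpres hrepne hrep

theorem mk_rep_mul_mk_rep (g g' : G) : 𝔤 g * 𝔤 g' = 𝔤 (g * g') := by
  rw [← Cong.mk_append, ← List.map_append, Cong.mk_eq_mk_iff]
  refine Cong.map Sum.inr (fun _ _ huv ↦ Or.inl (RelR.ofG huv)) ((hpres _ _ ?_ (hrepne _)).2 ?_)
  · simp [hrepne]
  · simp only [evalW, List.map_append, List.prod_append] at hrep ⊢
    rw [hrep, hrep, hrep]

variable (hk : 1 ≤ k)
include hk

theorem mk_rep_mul_mk_mul_mk_rep (g : G) {w : List A} (hw : w ≠ []) (g' : G) :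
    𝔤 g * 𝔴 w * 𝔤 g' = 𝔤 (g * h w * g') := by
  induction hlen : w.length using Nat.strong_induction_on generalizing g g' w with
  | _ n ih =>
    subst hlen
    have grp := mk_rep_mul_mk_rep h hpres hrepne hrep
    rcases le_or_gt w.length k with hwk | hwk
    · calc 𝔤 g * 𝔴 w * 𝔤 g' = 𝔤 g * (𝔤 1 * 𝔴 w * 𝔤 1) * 𝔤 g' := by
            simp only [← mul_assoc, grp, mul_one]
            rw [mul_assoc _ (𝔤 1), grp, one_mul]
        _ = 𝔤 (g * h w * g') := by rw [mk_rep_one_mul_mul_rep_one h ⟨hw, hwk⟩, grp, grp]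
    · set v := w.take (k + 1)
      have hv : v.length = k + 1 := by simp [v]; omega
      have hne : ∀ {u : List A}, 0 < u.length → u ≠ [] := List.ne_nil_of_length_pos
      have hsplit : 𝔴 w = 𝔴 v * 𝔴 (w.drop (k + 1)) := by
        rw [← mk_map_inl_append, List.take_append_drop]
      have htail : v.tail = v.rtake k := by
        rw [List.rtake, ← List.drop_one, hv, Nat.add_sub_cancel_left]
      calc 𝔤 g * 𝔴 w * 𝔤 g'
          = 𝔤 g * 𝔴 v.dropLast * 𝔤 (h v) * 𝔴 (v.tail ++ w.drop (k + 1)) * 𝔤 g' := by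
            rw [hsplit, mk_map_inl_of_mem_Ddot h ((mem_Ddot_Lk_iff hk).2 hv), mk_map_inl_append]
            simp only [mul_assoc]
        _ = 𝔤 (g * h v.dropLast * h v * h (v.tail ++ w.drop (k + 1)) * g') := by
            rw [ih _ (by simp; omega) _ (hne (by simp; omega)) _ rfl,
              ih _ (by simp; omega) _ (hne (by simp; omega)) _ rfl]
        _ = 𝔤 (g * h w * g') := by
            rw [h.map_of_length_le (w := v.dropLast) (by simp; omega), mul_one, htail,
              h.mul_map_mul_map_rtake_append, List.take_append_drop]

section
variable {m : List A} (hm : k ≤ m.length)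
include hm

theorem mk_map_inl_mul_mk_rep (g : G) : 𝔴 m * 𝔤 g = 𝔴 (m.take k) * 𝔤 (h m * g) := by
  rw [mk_map_inl_eq_take_mul h hm, mul_assoc _ _ (𝔤 g), mul_assoc, ← mul_assoc (𝔤 1),
    mk_rep_mul_mk_mul_mk_rep h hpres hrepne hrep hk _ (List.ne_nil_of_length_pos (by omega)),
    one_mul]

theorem mk_rep_mul_mk_map_inl (g : G) : 𝔤 g * 𝔴 m = 𝔤 (g * h m) * 𝔴 (m.rtake k) := by
  rw [mk_map_inl_eq_mul_rtake h hm, ← mul_assoc, ← mul_assoc,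
    mk_rep_mul_mk_mul_mk_rep h hpres hrepne hrep hk _ (List.ne_nil_of_length_pos (by omega)),
    mul_one]

theorem mk_map_inl_eq_take_mul_rep_mul_rtake :
    𝔴 m = 𝔴 (m.take k) * 𝔤 (h m) * 𝔴 (m.rtake k) := by
  rw [mk_map_inl_eq_take_mul h hm, mul_assoc _ (𝔤 1),
    mk_rep_mul_mk_map_inl h hpres hrepne hrep hk hm, one_mul, mul_assoc]

end

theorem mk_phiWord_mul_mk_phiWord {p q : List A × G × List A} (hp : memM k p) (hq : memM k q) :
    Cong.mk (RelR' (Lk A k) RG h rep k) (phiWord k rep p) *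
        Cong.mk (RelR' (Lk A k) RG h rep k) (phiWord k rep q) =
      Cong.mk (RelR' (Lk A k) RG h rep k) (phiWord k rep (mulM k h p q)) := by
  obtain ⟨u, g, v⟩ := p
  obtain ⟨u', g', v'⟩ := q
  have hmul : mulM k h (u, g, v) (u', g', v') =
      ((u ++ u').take k, g * h (v ++ u') * g', (v ++ v').rtake k) := rfl
  have hlen : ∀ {w : List A}, k ≤ w.length → ¬ (w.take k).length < k := by simp
  simp only [memM] at hp hq
  rw [hmul, mk_phiWord, mk_phiWord, mk_phiWord]
  rcases hp with ⟨rfl, rfl, hne, hle⟩ | ⟨hu, hv⟩ <;>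
    rcases hq with ⟨rfl, rfl, hne', hle'⟩ | ⟨hu', hv'⟩ <;> dsimp only
  · have hpos := List.length_pos_iff.2 hne
    have hpos' := List.length_pos_iff.2 hne'
    rw [if_pos (by omega), if_pos (by omega), ← mk_map_inl_append, one_mul, mul_one]
    rcases lt_or_ge (v ++ v').length k with hlt | hge
    · rw [List.take_of_length_le hlt.le, if_pos hlt]
    · rw [if_neg (hlen hge), mk_map_inl_eq_take_mul_rep_mul_rtake h hpres hrepne hrep hk hge]
  · have hpos := List.length_pos_iff.2 hne
    rw [if_pos (by omega), if_neg (by omega), if_neg (hlen (by simp; omega)),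
      List.rtake_append_of_le_length _ _ hv'.ge, List.rtake_of_length_le _ hv'.le, one_mul,
      ← mul_assoc, ← mul_assoc, ← mk_map_inl_append,
      mk_map_inl_mul_mk_rep h hpres hrepne hrep hk (by simp; omega)]
  · have hpos' := List.length_pos_iff.2 hne'
    rw [if_neg (by omega), if_pos (by omega), if_neg (hlen (by simp; omega)),
      List.take_append_of_le_length hu.ge, List.take_of_length_le hu.le, mul_one,
      mul_assoc _ (𝔴 v), ← mk_map_inl_append, mul_assoc,
      mk_rep_mul_mk_map_inl h hpres hrepne hrep hk (by simp; omega), mul_assoc]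
  · rw [if_neg (by omega), if_neg (by omega), if_neg (hlen (by simp; omega)),
      List.take_append_of_le_length hu.ge, List.take_of_length_le hu.le,
      List.rtake_append_of_le_length _ _ hv'.ge, List.rtake_of_length_le _ hv'.le,
      ← mk_rep_mul_mk_mul_mk_rep h hpres hrepne hrep hk _
        (List.ne_nil_of_length_pos (by simp; omega)), mk_map_inl_append]
    simp only [mul_assoc]

end Presentation

theorem memM_mulM [Group G] {k : ℕ} {hb : List A → G}
    (hb1 : ∀ w : List A, w.length ≤ k → hb w = 1) {p q : List A × G × List A}
    (hp : memM k p) (hq : memM k q) : memM k (mulM k hb p q) := by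
  obtain ⟨u, g, v⟩ := p
  obtain ⟨u', g', v'⟩ := q
  simp only [memM, mulM] at hp hq ⊢
  rcases hp with ⟨rfl, rfl, hne, hle⟩ | ⟨hu, hv⟩ <;>
    rcases hq with ⟨rfl, rfl, hne', hle'⟩ | ⟨hu', hv'⟩
  · have hpos := List.length_pos_iff.2 hne
    have hpos' := List.length_pos_iff.2 hne'
    by_cases hshort : (v ++ v').length ≤ k - 1
    · have hle : (v ++ v').length ≤ k := by omega
      left
      simp_all [List.take_of_length_le hle]
    · right
      simp only [List.length_append, List.length_take, List.length_drop] at hshort ⊢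
      omega
  all_goals
    right
    simp only [List.length_append, List.length_take, List.length_drop]
    omega

theorem Mk_embeds_in_S'k_general [Group G]
    (k : ℕ) (hk : 1 ≤ k)
    (RG : List A_G → List A_G → Prop) (evA : A_G → G)
    (hRGne : ∀ u v : List A_G, RG u v → u ≠ [] ∧ v ≠ [])
    (hpres : ∀ u v : List A_G, u ≠ [] → v ≠ [] →
      (Cong RG u v ↔ evalW evA u = evalW evA v))
    (rep : G → List A_G) (hrepne : ∀ g : G, rep g ≠ [])
    (hrep : ∀ g : G, evalW evA (rep g) = g)
    -- ħ is a k-superposition homomorphism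
    (hb : List A → G)
    (hb1 : ∀ w : List A, w.length ≤ k → hb w = 1)
    (hb2 : ∀ u v : List A, u ≠ [] → v ≠ [] →
      hb (u ++ v) = hb u * hb (u.drop (u.length - k) ++ v) ∧
      hb (u ++ v) = hb (u ++ v.take k) * hb v) :
    -- M_k(G, ħ) is closed under its multiplication
    (∀ p q : List A × G × List A, memM k p → memM k q → memM k (mulM k hb p q)) ∧
    -- φ is a semigroup homomorphism into S'_k(G, f)
    (∀ p q : List A × G × List A, memM k p → memM k q →
      Cong (RelR' (Lk A k) RG hb rep k)
        (phiWord k rep p ++ phiWord k rep q) (phiWord k rep (mulM k hb p q))) ∧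
    -- φ is injective
    (∀ p q : List A × G × List A, memM k p → memM k q →
      Cong (RelR' (Lk A k) RG hb rep k) (phiWord k rep p) (phiWord k rep q) →
      p = q) := by
  obtain ⟨h, rfl⟩ : ∃ h : SuperpositionHom k A G, h.toFun = hb :=
    ⟨.ofNonempty hb hb1 hb2, rfl⟩
  refine ⟨fun p q hp hq ↦ memM_mulM hb1 hp hq, fun p q hp hq ↦ ?_, fun p q hp hq hpq ↦ ?_⟩
  · rw [← Cong.mk_eq_mk_iff, Cong.mk_append]
    exact mk_phiWord_mul_mk_phiWord h hpres hrepne hrep hk hp hq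
  · refine h.toModel_injOn hp hq (WithOne.coe_injective ?_)
    rw [← h.eval_phiWord evA hrepne hrep hk hp, ← h.eval_phiWord evA hrepne hrep hk hq]
    exact h.eval_eq_of_cong evA hrepne hrep hk hRGne hpres hpq

/-- The map `φ : M_k(G, ħ) → S'_k(G, f)` defined by
`φ(v, 1_G, v) = [v]` for `v ∈ A^{≤k−1}` and `φ(u₁, g, u₂) = [u₁ w_g u₂]`
for `u₁, u₂ ∈ A^k`, `g ∈ G` (where `[·]` denotes the `ρ_{R'}`-class) is an
injective semigroup homomorphism from `M_k(G, ħ)` into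
`S'_k(G, f) = X⁺/ρ_{R'}`, where `f` is the restriction of the
`k`-superposition homomorphism `ħ` to `A^{≤k+1}`. -/
theorem Mk_embeds_in_S'k [Nonempty A] [Group G] [Finite G]
    (k : ℕ) (hk : 1 ≤ k)
    (RG : List A_G → List A_G → Prop) (evA : A_G → G)
    (hRGne : ∀ u v : List A_G, RG u v → u ≠ [] ∧ v ≠ [])
    (hpres : ∀ u v : List A_G, u ≠ [] → v ≠ [] →
      (Cong RG u v ↔ evalW evA u = evalW evA v))
    (rep : G → List A_G) (hrepne : ∀ g : G, rep g ≠ [])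
    (hrep : ∀ g : G, evalW evA (rep g) = g)
    -- ħ is a k-superposition homomorphism
    (hb : List A → G)
    (hb1 : ∀ w : List A, w.length ≤ k → hb w = 1)
    (hb2 : ∀ u v : List A, u ≠ [] → v ≠ [] →
      hb (u ++ v) = hb u * hb (u.drop (u.length - k) ++ v) ∧
      hb (u ++ v) = hb (u ++ v.take k) * hb v) :
    -- M_k(G, ħ) is closed under its multiplication
    (∀ p q : List A × G × List A, memM k p → memM k q → memM k (mulM k hb p q)) ∧
    -- φ is a semigroup homomorphism into S'_k(G, f)
    (∀ p q : List A × G × List A, memM k p → memM k q →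
      Cong (RelR' (Lk A k) RG hb rep k)
        (phiWord k rep p ++ phiWord k rep q) (phiWord k rep (mulM k hb p q))) ∧
    -- φ is injective
    (∀ p q : List A × G × List A, memM k p → memM k q →
      Cong (RelR' (Lk A k) RG hb rep k) (phiWord k rep p) (phiWord k rep q) →
      p = q) :=
  Mk_embeds_in_S'k_general k hk RG evA hRGne hpres rep hrepne hrep hb hb1 hb2
end
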